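/- Let N ≥ 1, M ≥ 2, d ≥ 2 be integers, ω = exp(2πi/d), Ω = exp(2πi/M), and for a rational ν let X(ν) be the d×d matrix with X(ν)_{n+1,n} = ω^{−ν} (0 ≤ n ≤ d−2), X(ν)_{0,d−1} = ω^{−ν(1−d)}, and all other entries zero, where ω^{x} = exp(2πi x/d). Define the generic Bell operator B = (1/M^N) Σ_{n=1}^{d−1} Σ_{γ=0}^{M−1} ⊗_{j=1}^{N} ( Σ_{η_j=0}^{M−1} Ω^{γ η_j} · exp(2πi n η_j/(M d)) · X(η_j/M)^n ) acting on the N-fold tensor power (ℂ^d)^{⊗N}. Then the N-partite generalized GHZ state ψ = (1/√d) Σ_{k=0}^{d−1} e_k^{⊗N} is an eigenvector of B with eigenvalue d − 1, i.e., B ψ = (d−1) ψ. -/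

import Mathlib

open Matrix

/-- The `d × d` matrix `X(ν)`: the cyclic shift conjugated by the phase shift
`P_ν`, with entries `X(ν)_{n+1,n} = ω^{-ν}` for `0 ≤ n ≤ d-2`,
`X(ν)_{0,d-1} = ω^{-ν(1-d)}`, and zero elsewhere, where
`ω^x = exp(2πi·x/d)`. -/
noncomputable def Xmat (d : ℕ) (ν : ℚ) : Matrix (Fin d) (Fin d) ℂ :=
  Matrix.of fun i j : Fin d =>
    if (i : ℕ) = (j : ℕ) + 1 then
      Complex.exp (2 * Real.pi * Complex.I * (-(ν : ℂ)) / d)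
    else if (i : ℕ) = 0 ∧ (j : ℕ) = d - 1 then
      Complex.exp (2 * Real.pi * Complex.I * (-(ν : ℂ) * (1 - (d : ℂ))) / d)
    else 0

/-- The single-party factor
`Σ_{η=0}^{M-1} Ω^{γη} · exp(2πi n η/(M d)) · X(η/M)^n` of the generic Bell
operator with `M` measurement settings, where `Ω = exp(2πi/M)`. -/
noncomputable def partyFactor (d M γ n : ℕ) : Matrix (Fin d) (Fin d) ℂ :=
  ∑ η ∈ Finset.range M,
    (Complex.exp (2 * Real.pi * Complex.I / M) ^ (γ * η) *
      Complex.exp (2 * Real.pi * Complex.I * n * η / (M * d))) •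
        Xmat d ((η : ℚ) / M) ^ n

/-- The generic Bell operator
`B = (1/M^N) Σ_{n=1}^{d-1} Σ_{γ=0}^{M-1} ⊗_{j=1}^{N} Σ_{η_j=0}^{M-1}
Ω^{γη_j} exp(2πi n η_j/(M d)) X(η_j/M)^n` for the `(N,M,d)` scenario, realized
on the `N`-fold tensor power `(ℂ^d)^{⊗N}` (indexed by `Fin N → Fin d`), the
entry of the `N`-fold tensor product of matrices at `(f, g)` being the product
of the single-party entries at `(f j, g j)`. -/
noncomputable def genericBellOperator (N M d : ℕ) :
    Matrix (Fin N → Fin d) (Fin N → Fin d) ℂ :=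
  (1 / (M : ℂ) ^ N) •
    ∑ n ∈ Finset.Icc 1 (d - 1), ∑ γ ∈ Finset.range M,
      Matrix.of fun f g : Fin N → Fin d =>
        ∏ j : Fin N, partyFactor d M γ n (f j) (g j)


/-!
`X(ν)` is the cyclic shift conjugated by the diagonal phases `c k = ω^{-νk}`, so `X(ν)^n` has
the entry `c i / c j` at `(i, j)` when `i ≡ j + n (mod d)` and zero elsewhere. With
`i = j + n - d w`, `w = ⌊(j + n)/d⌋`, and `ν = η/M`, this ratio cancels `exp(2πi nη/(Md))` up to
`Ω^{wη}`, so the sum over the settings `η` is a character sum: the single-party factor is `M`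
times the shift by `n`, restricted to those `γ` with `M ∣ γ + w`. On `Σ_k e_k^{⊗N}` exactly one
`γ < M` survives for each `k`, so each `n` contributes `M^N` times the GHZ vector (the shift only
permutes the `k`), and the `d - 1` values of `n` produce the eigenvalue.
-/

open Finset Complex
open scoped Real

section TwistedShift

variable {K : Type*} [Field K] {d : ℕ}

def twistedShift (c : Fin d → K) : Matrix (Fin d) (Fin d) K :=
  Matrix.of fun i j => if (i : ℕ) = (j + 1) % d then c i / c j else 0

@[simp]
theorem twistedShift_apply (c : Fin d → K) (i j : Fin d) :
    twistedShift c i j = if (i : ℕ) = (j + 1) % d then c i / c j else 0 :=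
  rfl

theorem twistedShift_pow_apply {c : Fin d → K} (hc : ∀ i, c i ≠ 0) (n : ℕ) (i j : Fin d) :
    (twistedShift c ^ n) i j = if (i : ℕ) = (j + n) % d then c i / c j else 0 := by
  induction n generalizing i with
  | zero =>
    simp only [pow_zero, Matrix.one_apply, Fin.ext_iff, add_zero, Nat.mod_eq_of_lt j.isLt]
    split_ifs with h
    · rw [Fin.ext h, div_self (hc j)]
    · rfl
  | succ n ih =>
    let m₀ : Fin d := ⟨(j + n) % d, Nat.mod_lt _ j.pos⟩
    have hm : ∀ m : Fin d, (m : ℕ) = (j + n) % d ↔ m = m₀ := fun m => (Fin.ext_iff (b := m₀)).symm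
    have hval : ((m₀ : ℕ) + 1) % d = (j + (n + 1)) % d := by
      rw [Nat.mod_add_mod, add_assoc]
    rw [pow_succ', Matrix.mul_apply]
    simp only [ih, twistedShift_apply, hm, mul_ite, mul_zero, sum_ite_eq', mem_univ, if_true, hval]
    split_ifs <;> simp [div_mul_div_cancel₀ (hc m₀)]

end TwistedShift

theorem Xmat_eq_twistedShift (d : ℕ) (ν : ℚ) :
    Xmat d ν = twistedShift fun k => exp (2 * π * I * (-ν) * k / d) := by
  ext i j
  have hd : 0 < d := j.pos
  simp only [Xmat, twistedShift_apply, Matrix.of_apply, ← Complex.exp_sub]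
  rcases Nat.lt_or_ge (j + 1) d with hlt | hge
  · rw [Nat.mod_eq_of_lt hlt]
    split_ifs with h₁ h₂
    · congr 1
      rw [h₁]; push_cast; ring
    · omega
    · rfl
  · have hj : (j : ℕ) = d - 1 := by omega
    rw [show (j : ℕ) + 1 = d by omega, Nat.mod_self]
    by_cases hi : (i : ℕ) = 0
    · rw [if_neg (by omega), if_pos ⟨hi, hj⟩, if_pos hi]
      congr 1
      rw [hi, hj, Nat.cast_sub hd]; push_cast; ring
    · rw [if_neg (by omega), if_neg (fun h => hi h.1), if_neg hi]

theorem IsPrimitiveRoot.sum_range_pow_mul {R : Type*} [CommRing R] [IsDomain R] {ζ : R} {k : ℕ}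
    (hζ : IsPrimitiveRoot ζ k) (t : ℕ) :
    ∑ η ∈ range k, ζ ^ (t * η) = if k ∣ t then (k : R) else 0 := by
  simp only [pow_mul]
  split_ifs with ht
  · simp [(hζ.pow_eq_one_iff_dvd t).mpr ht]
  · have hne : ζ ^ t - 1 ≠ 0 := sub_ne_zero.mpr fun h => ht ((hζ.pow_eq_one_iff_dvd t).mp h)
    refine (mul_eq_zero.mp ?_).resolve_left hne
    rw [mul_comm, geom_sum_mul, ← pow_mul, mul_comm, pow_mul, hζ.pow_eq_one, one_pow, sub_self]

theorem partyFactor_apply {M : ℕ} (hM : M ≠ 0) (d γ n : ℕ) (i j : Fin d) :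
    partyFactor d M γ n i j =
      if (i : ℕ) = (j + n) % d then if M ∣ γ + (j + n) / d then (M : ℂ) else 0 else 0 := by
  simp only [partyFactor, Matrix.sum_apply, Matrix.smul_apply, Xmat_eq_twistedShift,
    twistedShift_pow_apply (fun _ => Complex.exp_ne_zero _), smul_eq_mul, mul_ite, mul_zero]
  by_cases hi : (i : ℕ) = (j + n) % d
  · simp only [if_pos hi]
    set w := (j + n) / d
    have hiw : (i : ℂ) = j + n - d * w := by
      rw [eq_sub_iff_add_eq, hi]; exact_mod_cast Nat.mod_add_div _ _
    have phase (η : ℕ) : exp (2 * π * I * n * η / (M * d)) *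
        (exp (2 * π * I * (-((η / M : ℚ) : ℂ)) * i / d) /
          exp (2 * π * I * (-((η / M : ℚ) : ℂ)) * j / d)) = exp (2 * π * I / M) ^ (w * η) := by
      rw [← exp_sub, ← exp_add, ← exp_nat_mul, hiw]
      have : (d : ℂ) ≠ 0 := by exact_mod_cast j.pos.ne'
      congr 1; push_cast; field_simp; ring
    rw [← (isPrimitiveRoot_exp M hM).sum_range_pow_mul]
    refine sum_congr rfl fun η _ => ?_
    rw [mul_assoc, phase, ← pow_add, ← add_mul]
  · simp only [if_neg hi, sum_const_zero]

theorem sum_range_ite_dvd_add {R : Type*} [AddCommMonoid R] {M : ℕ} (hM : M ≠ 0) (w : ℕ)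
    (c : R) : ∑ γ ∈ range M, (if M ∣ γ + w then c else 0) = c := by
  have hγ₀ : (M - w % M) % M < M := Nat.mod_lt _ (Nat.pos_of_ne_zero hM)
  have hdvd : M ∣ (M - w % M) % M + w := by
    rw [← Nat.modEq_zero_iff_dvd]
    calc (M - w % M) % M + w ≡ M - w % M + w % M [MOD M] :=
          (Nat.mod_modEq _ _).add (Nat.mod_modEq _ _).symm
      _ = M := Nat.sub_add_cancel (Nat.mod_lt _ (Nat.pos_of_ne_zero hM)).le
      _ ≡ 0 [MOD M] := Nat.modEq_zero_iff_dvd.mpr dvd_rfl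
  rw [sum_eq_single_of_mem _ (mem_range.mpr hγ₀), if_pos hdvd]
  intro γ hγ hne
  refine if_neg fun h => hne (Nat.ModEq.eq_of_lt_of_lt ?_ (mem_range.mp hγ) hγ₀)
  exact Nat.ModEq.add_right_cancel' w
    ((Nat.modEq_zero_iff_dvd.mpr h).trans (Nat.modEq_zero_iff_dvd.mpr hdvd).symm)

def ghzVector (N d : ℕ) : (Fin N → Fin d) → ℂ :=
  ∑ k : Fin d, Pi.single (fun _ => k) 1

theorem ghzVector_apply {N d : ℕ} (f : Fin N → Fin d) :
    ghzVector N d f = ∑ k : Fin d, if f = (fun _ => k) then 1 else 0 := by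
  simp [ghzVector, Pi.single_apply]

theorem tensorPower_mulVec_ghzVector {N d : ℕ} (A : Matrix (Fin d) (Fin d) ℂ) :
    (Matrix.of fun f g : Fin N → Fin d => ∏ j, A (f j) (g j)) *ᵥ ghzVector N d =
      fun f => ∑ k, ∏ j, A (f j) k := by
  ext f
  simp [ghzVector, Matrix.mulVec_sum]

open Fin.NatCast in
theorem sum_partyFactor_tensorPower_mulVec_ghzVector {N M d : ℕ} [NeZero d] (hN : N ≠ 0)
    (hM : M ≠ 0) (n : ℕ) :
    ∑ γ ∈ range M,
        (Matrix.of fun f g : Fin N → Fin d => ∏ j, partyFactor d M γ n (f j) (g j)) *ᵥ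
          ghzVector N d =
      (M : ℂ) ^ N • ghzVector N d := by
  ext f
  have hshift (k : Fin d) : (∀ j, (f j : ℕ) = (k + n) % d) ↔ f = fun _ => k + (n : Fin d) := by
    simp [funext_iff, Fin.ext_iff, Fin.val_add, Fin.val_natCast]
  rw [Finset.sum_apply]
  simp only [tensorPower_mulVec_ghzVector]
  simp only [partyFactor_apply hM, Fintype.prod_ite_zero, prod_const, card_univ,
    Fintype.card_fin, ite_pow, zero_pow hN]
  rw [sum_comm]
  simp only [sum_ite_irrel, sum_range_ite_dvd_add hM, sum_const_zero, hshift, Pi.smul_apply,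
    ghzVector_apply, smul_eq_mul, mul_sum, mul_ite, mul_one, mul_zero]
  exact Fintype.sum_equiv (Equiv.addRight (n : Fin d)) _ _ fun k => rfl

theorem genericBellOperator_mulVec_ghzVector {N M d : ℕ} (hN : N ≠ 0) (hM : M ≠ 0) :
    genericBellOperator N M d *ᵥ ghzVector N d = ((d : ℂ) - 1) • ghzVector N d := by
  rcases d with _ | d
  · simp [ghzVector]
  simp only [genericBellOperator, smul_mulVec, sum_mulVec,
    sum_partyFactor_tensorPower_mulVec_ghzVector hN hM, sum_const, Nat.card_Icc]
  have hMN : (M : ℂ) ^ N ≠ 0 := pow_ne_zero _ (Nat.cast_ne_zero.mpr hM)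
  rw [smul_comm, smul_smul, one_div, inv_mul_cancel₀ hMN, one_smul, Nat.add_sub_cancel,
    Nat.add_sub_cancel, ← Nat.cast_smul_eq_nsmul ℂ, Nat.cast_add_one, add_sub_cancel_right]

theorem ghz_eigenvector_of_generic_bell_operator_general
    (N M d : ℕ) (hN : 1 ≤ N) (hM : 2 ≤ M)
    (ψ : (Fin N → Fin d) → ℂ)
    (hψ : ψ = (1 / (Real.sqrt d : ℂ)) •
      ∑ k : Fin d, (Pi.single (fun _ => k) (1 : ℂ) : (Fin N → Fin d) → ℂ)) :
    genericBellOperator N M d *ᵥ ψ = ((d : ℂ) - 1) • ψ := by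
  subst hψ
  change _ *ᵥ (_ • ghzVector N d) = _ • _ • ghzVector N d
  rw [Matrix.mulVec_smul, genericBellOperator_mulVec_ghzVector (by omega) (by omega), smul_comm]

/-- **The `N`-partite GHZ state is an eigenvector of the generic Bell operator
with eigenvalue `d - 1`:** for `ψ = (1/√d) Σ_k e_k^{⊗N}` one has
`B ψ = (d-1) ψ`. -/
theorem ghz_eigenvector_of_generic_bell_operator
    (N M d : ℕ) (hN : 1 ≤ N) (hM : 2 ≤ M) (hd : 2 ≤ d)
    (ψ : (Fin N → Fin d) → ℂ)
    (hψ : ψ = (1 / (Real.sqrt d : ℂ)) •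
      ∑ k : Fin d, (Pi.single (fun _ => k) (1 : ℂ) : (Fin N → Fin d) → ℂ)) :
    genericBellOperator N M d *ᵥ ψ = ((d : ℂ) - 1) • ψ :=
  ghz_eigenvector_of_generic_bell_operator_general N M d hN hM ψ hψ
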